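/- For n ≥ 2 and positive reals a_1 ≤ a_2 ≤ ... ≤ a_n satisfying a_1^{a_n} ≥ e^{-1}, the cyclic sum a_1^{a_2} + a_2^{a_3} + ... + a_n^{a_1} is at least the reversed sum ∑_{i=1}^{n} a_i^{a_{n+1-i}}. -/

import Mathlib

/-!
Induct on `n`. Passing from `n` to `n + 1` adds `a_n ^ a_{n+1} - a_n ^ a_1 + a_{n+1} ^ a_1` to the
cyclic sum and `a_{n+1} ^ a_1 + ∑_{i ≤ n} (a_i ^ a_{n+2-i} - a_i ^ a_{n+1-i})` to the reversed one.
Writing `a_n ^ a_{n+1} - a_n ^ a_1` as a telescoping sum and pairing terms, it suffices that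
`u ↦ u ^ t - u ^ s` is nondecreasing for `s ≤ t` on `{u | -1 ≤ t * log u}`; there its derivative
`(t * u ^ t - s * u ^ s) / u` is nonnegative because `r ↦ r * u ^ r` is nondecreasing while
`r * log u ≥ -1`. The hypothesis `a_1 ^ a_n ≥ e⁻¹` is exactly what makes every pair qualify.
-/

open Finset Real

lemma mul_rpow_le_mul_rpow {u s t : ℝ} (hu : 0 < u) (ht : 0 ≤ t) (hst : s ≤ t)
    (hlog : -1 ≤ t * log u) : s * u ^ s ≤ t * u ^ t := by
  have hexp : 1 + (t - s) * log u ≤ u ^ (t - s) := by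
    rw [rpow_def_of_pos hu]
    linarith [add_one_le_exp (log u * (t - s))]
  have key : s ≤ t * u ^ (t - s) := by
    nlinarith [mul_le_mul_of_nonneg_left hexp ht]
  calc s * u ^ s ≤ t * u ^ (t - s) * u ^ s := by gcongr
    _ = t * u ^ t := by rw [mul_assoc, ← rpow_add hu, sub_add_cancel]

lemma monotoneOn_rpow_sub_rpow {x s t : ℝ} (hx : 0 < x) (ht : 0 ≤ t) (hst : s ≤ t)
    (hlog : -1 ≤ t * log x) : MonotoneOn (fun u : ℝ => u ^ t - u ^ s) (Set.Ici x) := by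
  have hderiv : ∀ u ∈ Set.Ici x,
      HasDerivAt (fun u : ℝ => u ^ t - u ^ s) (t * u ^ (t - 1) - s * u ^ (s - 1)) u :=
    fun u hu => have hu0 : u ≠ 0 := (hx.trans_le hu).ne'
      (hasDerivAt_rpow_const (Or.inl hu0)).sub (hasDerivAt_rpow_const (Or.inl hu0))
  refine monotoneOn_of_hasDerivWithinAt_nonneg (convex_Ici x)
    (fun u hu => (hderiv u hu).continuousAt.continuousWithinAt)
    (fun u hu => (hderiv u (interior_subset hu)).hasDerivWithinAt) fun u hu => ?_
  have hxu : x ≤ u := interior_subset hu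
  have hu : 0 < u := hx.trans_le hxu
  have hlog_u : -1 ≤ t * log u := hlog.trans (by gcongr)
  rw [sub_nonneg, rpow_sub_one hu.ne', rpow_sub_one hu.ne', ← mul_div_assoc, ← mul_div_assoc]
  exact div_le_div_of_nonneg_right (mul_rpow_le_mul_rpow hu ht hst hlog_u) hu.le

lemma neg_one_le_mul_log_of_le {a x t T : ℝ} (ha : 0 < a) (hax : a ≤ x) (ht : 0 ≤ t)
    (htT : t ≤ T) (hlog : -1 ≤ T * log a) : -1 ≤ t * log x := by
  rcases le_or_gt 0 (log x) with hx | hx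
  · nlinarith
  · have : log a ≤ log x := log_le_log ha hax
    nlinarith

lemma sum_range_succ_mod {M : Type*} [AddCommMonoid M] (g : ℕ → ℕ → M) (m : ℕ) :
    ∑ i ∈ range (m + 1), g i ((i + 1) % (m + 1)) = ∑ i ∈ range m, g i (i + 1) + g m 0 := by
  rw [sum_range_succ, Nat.mod_self]
  congr 1
  exact sum_congr rfl fun i hi => by rw [Nat.mod_eq_of_lt (by simpa using mem_range.mp hi)]

section Sequence

variable {A : ℕ → ℝ}

lemma sum_range_rpow_sub_le_rpow_sub (hA0 : 0 < A 0) (hA : Monotone A) (m : ℕ)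
    (hlog : -1 ≤ A (m + 1) * log (A 0)) :
    ∑ i ∈ range (m + 1), (A i ^ A (m + 1 - i) - A i ^ A (m - i)) ≤
      A m ^ A (m + 1) - A m ^ A 0 := by
  have hpos : ∀ i, 0 < A i := fun i => hA0.trans_le (hA (Nat.zero_le i))
  rw [← sum_range_reflect, ← sum_range_sub (fun j => A m ^ A j)]
  refine sum_le_sum fun j hj => ?_
  have hjm : j ≤ m := Nat.lt_succ_iff.mp (mem_range.mp hj)
  rw [show m + 1 - 1 - j = m - j by omega, show m + 1 - (m - j) = j + 1 by omega,
    show m - (m - j) = j by omega]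
  exact monotoneOn_rpow_sub_rpow (hpos _) (hpos _).le (hA j.le_succ)
    (neg_one_le_mul_log_of_le hA0 (hA (Nat.zero_le _)) (hpos _).le (hA (by omega)) hlog)
    Set.self_mem_Ici (hA (Nat.sub_le m j)) (hA (Nat.sub_le m j))

lemma sum_range_rpow_rev_le (hA0 : 0 < A 0) (hA : Monotone A) (m : ℕ)
    (hlog : -1 ≤ A m * log (A 0)) :
    ∑ i ∈ range (m + 1), A i ^ A (m - i) ≤ ∑ i ∈ range m, A i ^ A (i + 1) + A m ^ A 0 := by
  induction m with
  | zero => simp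
  | succ m ih =>
    have hpos : ∀ i, 0 < A i := fun i => hA0.trans_le (hA (Nat.zero_le i))
    have ih := ih (neg_one_le_mul_log_of_le hA0 le_rfl (hpos m).le (hA m.le_succ) hlog)
    have hstep := sum_range_rpow_sub_le_rpow_sub hA0 hA m hlog
    rw [sum_sub_distrib] at hstep
    rw [sum_range_succ, Nat.sub_self, sum_range_succ (fun i => A i ^ A (i + 1))]
    linarith

lemma sum_range_rpow_rev_le_sum_range_rpow_cyclic (hA0 : 0 < A 0) (hA : Monotone A) {n : ℕ}
    (hlog : -1 ≤ A (n - 1) * log (A 0)) :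
    ∑ i ∈ range n, A i ^ A (n - 1 - i) ≤ ∑ i ∈ range n, A i ^ A ((i + 1) % n) := by
  rcases n with _ | m
  · simp
  · rw [sum_range_succ_mod (fun i j => A i ^ A j)]
    simpa using sum_range_rpow_rev_le hA0 hA m hlog

end Sequence

theorem stmt_3 (n : ℕ) (hn : 2 ≤ n) (a : Fin n → ℝ)
    (hpos : ∀ i, 0 < a i) (hmono : Monotone a)
    (hC : a ⟨0, by omega⟩ ^ a ⟨n - 1, by omega⟩ ≥ Real.exp (-1)) :
    ∑ i : Fin n, a i ^ a (Fin.rev i) ≤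
      ∑ i : Fin n, a i ^ a ⟨(i.val + 1) % n, Nat.mod_lt _ (by omega)⟩ := by
  set A : ℕ → ℝ := fun i => a ⟨min i (n - 1), by omega⟩
  have hAa : ∀ i : Fin n, A i = a i := fun i => by simp only [A]; congr; omega
  have hA : Monotone A := fun i j hij => hmono (Fin.mk_le_mk.mpr (min_le_min_right _ hij))
  have hA0 : 0 < A 0 := hpos _
  have hlog : -1 ≤ A (n - 1) * log (A 0) := by
    rw [← log_rpow hA0, le_log_iff_exp_le (rpow_pos_of_pos hA0 _)]
    simpa [A] using hC
  calc ∑ i : Fin n, a i ^ a i.rev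
      = ∑ i ∈ range n, A i ^ A (n - 1 - i) := by
        rw [← Fin.sum_univ_eq_sum_range (fun i => A i ^ A (n - 1 - i))]
        refine sum_congr rfl fun i _ => ?_
        rw [hAa, ← hAa i.rev, Fin.val_rev]
        congr 2
        omega
    _ ≤ ∑ i ∈ range n, A i ^ A ((i + 1) % n) :=
        sum_range_rpow_rev_le_sum_range_rpow_cyclic hA0 hA hlog
    _ = ∑ i : Fin n, a i ^ a ⟨(i.val + 1) % n, Nat.mod_lt _ (by omega)⟩ := by
        rw [← Fin.sum_univ_eq_sum_range (fun i => A i ^ A ((i + 1) % n))]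
        exact sum_congr rfl fun i _ => by rw [hAa, ← hAa ⟨(i.val + 1) % n, _⟩]
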